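/- arXiv:0810.1146 — 2 statements merged into one kernel-verified Lean document; each statement's English description precedes it below -/
import Mathlib

section
/- For the WENO-6 subdivision scheme, at odd indices of the first difference, |d(S_weno(f))_{2n+1}| ≤ (3/4)·max(sup_k |df_k|, sup_k |Df_k|), where d(S_weno(f))_{2n+1} = S_weno(f)_{2n+2} - S_weno(f)_{2n+1}. -/
/-!
The difference `f (n + 1) - S_weno(f)_{2n+1}` is `df_n / 2` plus a combination of four second
differences whose coefficients have absolute values summing to `(4 α₀ + 2 α₁ + 4 α₂) / 16 ≤ 1 / 4`.
The triangle inequality, with every difference bounded by the maximum of the two suprema, gives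
`1 / 2 + 1 / 4 = 3 / 4`. Boundedness of `f` makes the suprema genuine upper bounds (`⨆` of an
unbounded family of reals is `0`).
-/

/-- First difference operator. -/
def d (f : ℤ → ℝ) (n : ℤ) : ℝ := f (n + 1) - f n

/-- Second difference operator. -/
def D (f : ℤ → ℝ) (n : ℤ) : ℝ := f (n + 1) - 2 * f n + f (n - 1)

section Bounds

variable {f : ℤ → ℝ} {C : ℝ}

lemma abs_d_le_of_forall_abs_le (hC : ∀ n, |f n| ≤ C) (k : ℤ) : |d f k| ≤ 2 * C := by
  obtain ⟨h₁, h₁'⟩ := abs_le.mp (hC (k + 1))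
  obtain ⟨h₀, h₀'⟩ := abs_le.mp (hC k)
  rw [d, abs_le]
  constructor <;> linarith

lemma abs_D_le_of_forall_abs_le (hC : ∀ n, |f n| ≤ C) (k : ℤ) : |D f k| ≤ 4 * C := by
  obtain ⟨h₁, h₁'⟩ := abs_le.mp (hC (k + 1))
  obtain ⟨h₀, h₀'⟩ := abs_le.mp (hC k)
  obtain ⟨hm, hm'⟩ := abs_le.mp (hC (k - 1))
  rw [D, abs_le]
  constructor <;> linarith

lemma bddAbove_range_abs_d (hC : ∀ n, |f n| ≤ C) : BddAbove (Set.range fun k => |d f k|) :=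
  ⟨2 * C, Set.forall_mem_range.2 (abs_d_le_of_forall_abs_le hC)⟩

lemma bddAbove_range_abs_D (hC : ∀ n, |f n| ≤ C) : BddAbove (Set.range fun k => |D f k|) :=
  ⟨4 * C, Set.forall_mem_range.2 (abs_D_le_of_forall_abs_le hC)⟩

end Bounds

lemma abs_mul_le_of_nonneg_of_abs_le {c y M : ℝ} (hc : 0 ≤ c) (hy : |y| ≤ M) :
    |c * y| ≤ c * M := by
  rw [abs_mul, abs_of_nonneg hc]
  exact mul_le_mul_of_nonneg_left hy hc

lemma abs_weno6_combination_le {a₀ a₁ a₂ x y₀ y₁ y₂ y₃ M : ℝ}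
    (ha₀ : 0 ≤ a₀) (ha₁ : 0 ≤ a₁) (ha₂ : 0 ≤ a₂) (hsum : a₀ + a₁ + a₂ = 1)
    (hx : |x| ≤ M) (hy₀ : |y₀| ≤ M) (hy₁ : |y₁| ≤ M) (hy₂ : |y₂| ≤ M) (hy₃ : |y₃| ≤ M) :
    |x / 2 - a₀ / 16 * y₀ + (3 * a₀ + a₁) / 16 * y₁ + (a₁ + 3 * a₂) / 16 * y₂
      - a₂ / 16 * y₃| ≤ 3 / 4 * M := by
  have hM : 0 ≤ M := (abs_nonneg x).trans hx
  set u := x / 2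
  set v₀ := a₀ / 16 * y₀
  set v₁ := (3 * a₀ + a₁) / 16 * y₁
  set v₂ := (a₁ + 3 * a₂) / 16 * y₂
  set v₃ := a₂ / 16 * y₃
  have hu : |u| ≤ M / 2 := by rw [abs_div, abs_two]; linarith
  have hv₀ : |v₀| ≤ a₀ / 16 * M := abs_mul_le_of_nonneg_of_abs_le (by positivity) hy₀
  have hv₁ : |v₁| ≤ (3 * a₀ + a₁) / 16 * M := abs_mul_le_of_nonneg_of_abs_le (by positivity) hy₁
  have hv₂ : |v₂| ≤ (a₁ + 3 * a₂) / 16 * M := abs_mul_le_of_nonneg_of_abs_le (by positivity) hy₂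
  have hv₃ : |v₃| ≤ a₂ / 16 * M := abs_mul_le_of_nonneg_of_abs_le (by positivity) hy₃
  have htriangle : |u - v₀ + v₁ + v₂ - v₃| ≤ |u| + |v₀| + |v₁| + |v₂| + |v₃| := by
    linarith [abs_sub u v₀, abs_add_le (u - v₀) v₁, abs_add_le (u - v₀ + v₁) v₂,
      abs_sub (u - v₀ + v₁ + v₂) v₃]
  calc |u - v₀ + v₁ + v₂ - v₃| ≤ |u| + |v₀| + |v₁| + |v₂| + |v₃| := htriangle
    _ ≤ M / 2 + (4 * a₀ + 2 * a₁ + 4 * a₂) / 16 * M := by linarith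
    _ = 3 / 4 * M - a₁ / 8 * M := by rw [show a₂ = 1 - a₀ - a₁ by linarith]; ring
    _ ≤ 3 / 4 * M := by linarith [mul_nonneg ha₁ hM]

/-- `Sodd n` stands for `S_weno(f)_{2n+1}`, so `f (n + 1) - Sodd n` is `d(S_weno f)_{2n+1}`. -/
theorem weno6_d_odd (f : ℤ → ℝ) (hf : ∃ C, ∀ n, |f n| ≤ C)
    (a0 a1 a2 : ℤ → ℝ)
    (ha0 : ∀ n, 0 ≤ a0 n) (ha1 : ∀ n, 0 ≤ a1 n) (ha2 : ∀ n, 0 ≤ a2 n)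
    (hsum : ∀ n, a0 n + a1 n + a2 n = 1)
    (Sodd : ℤ → ℝ)
    (hS : ∀ n, Sodd n = (f n + f (n + 1)) / 2
        + (a0 n / 16) * D f (n + 2) - ((3 * a0 n + a1 n) / 16) * D f (n + 1)
        - ((a1 n + 3 * a2 n) / 16) * D f n + (a2 n / 16) * D f (n - 1))
    (n : ℤ) :
    |f (n + 1) - Sodd n| ≤ (3 / 4) * max (⨆ k, |d f k|) (⨆ k, |D f k|) := by
  obtain ⟨C, hC⟩ := hf
  have hd : ∀ k, |d f k| ≤ max (⨆ k, |d f k|) (⨆ k, |D f k|) := fun k =>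
    (le_ciSup (bddAbove_range_abs_d hC) k).trans (le_max_left _ _)
  have hD : ∀ k, |D f k| ≤ max (⨆ k, |d f k|) (⨆ k, |D f k|) := fun k =>
    (le_ciSup (bddAbove_range_abs_D hC) k).trans (le_max_right _ _)
  have hdiff : f (n + 1) - Sodd n = d f n / 2 - a0 n / 16 * D f (n + 2)
      + (3 * a0 n + a1 n) / 16 * D f (n + 1) + (a1 n + 3 * a2 n) / 16 * D f n
      - a2 n / 16 * D f (n - 1) := by
    rw [hS, d]; ring
  rw [hdiff]
  exact abs_weno6_combination_le (ha0 n) (ha1 n) (ha2 n) (hsum n)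
    (hd n) (hD _) (hD _) (hD _) (hD _)
end

section
/- The WENO-6 perturbation is uniformly bounded: the nonlinear part F satisfies |F_n| ≤ (1/2)·max(sup_k |df_k|, sup_k |Df_k|) for every bounded sequence f, where F_n = (α₀/16)Df_{n+2} - ((3α₀+α₁)/16)Df_{n+1} - ((α₁+3α₂)/16)Df_n + (α₂/16)Df_{n-1}. -/
/-!
Each `D f k` is bounded by `S = ⨆ k, |D f k|` (a genuine supremum, since `f` bounded gives
`|D f k| ≤ 4 C`), and the absolute weights of the four second differences sum to
`(4 α₀ + 2 α₁ + 4 α₂) / 16 ≤ 1 / 4`. Hence `|F_n| ≤ S / 4`, which is even better than claimed.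
-/

open Set

lemma abs_D_le {f : ℤ → ℝ} {C : ℝ} (hC : ∀ n, |f n| ≤ C) (k : ℤ) : |D f k| ≤ 4 * C := by
  have h2 : |2 * f k| = 2 * |f k| := by rw [abs_mul, abs_two]
  calc |D f k| ≤ |f (k + 1)| + |2 * f k| + |f (k - 1)| :=
        (abs_add_le _ _).trans (add_le_add_left (abs_sub _ _) _)
    _ ≤ 4 * C := by linarith [hC (k + 1), hC k, hC (k - 1)]

lemma abs_weno6_combination_le_s13 {a0 a1 a2 M x y z w : ℝ} (ha0 : 0 ≤ a0) (ha1 : 0 ≤ a1)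
    (ha2 : 0 ≤ a2) (hsum : a0 + a1 + a2 = 1) (hx : |x| ≤ M) (hy : |y| ≤ M) (hz : |z| ≤ M)
    (hw : |w| ≤ M) :
    |(a0 / 16) * x - ((3 * a0 + a1) / 16) * y - ((a1 + 3 * a2) / 16) * z + (a2 / 16) * w|
      ≤ M / 4 := by
  have hM : 0 ≤ M := (abs_nonneg x).trans hx
  calc _ ≤ |a0 / 16| * |x| + |(3 * a0 + a1) / 16| * |y| + |(a1 + 3 * a2) / 16| * |z|
          + |a2 / 16| * |w| := by
        simp only [← abs_mul]
        refine (abs_add_le _ _).trans ?_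
        gcongr
        refine (abs_sub _ _).trans ?_
        gcongr
        exact abs_sub _ _
    _ ≤ a0 / 16 * M + (3 * a0 + a1) / 16 * M + (a1 + 3 * a2) / 16 * M + a2 / 16 * M := by
        rw [abs_of_nonneg (a := a0 / 16) (by positivity),
          abs_of_nonneg (a := (3 * a0 + a1) / 16) (by positivity),
          abs_of_nonneg (a := (a1 + 3 * a2) / 16) (by positivity),
          abs_of_nonneg (a := a2 / 16) (by positivity)]
        gcongr
    _ = (4 * a0 + 2 * a1 + 4 * a2) / 16 * M := by ring
    _ ≤ M / 4 := by nlinarith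

/-- The WENO-6 perturbation term is uniformly bounded:
`|F_n| ≤ (1/2)·max(⨆ k |df_k|, ⨆ k |Df_k|)`. -/
theorem weno6_perturbation_bounded (f : ℤ → ℝ) (hf : ∃ C, ∀ n, |f n| ≤ C)
    (a0 a1 a2 : ℝ) (ha0 : 0 ≤ a0) (ha1 : 0 ≤ a1) (ha2 : 0 ≤ a2)
    (hsum : a0 + a1 + a2 = 1) (n : ℤ) :
    |(a0 / 16) * D f (n + 2) - ((3 * a0 + a1) / 16) * D f (n + 1)
      - ((a1 + 3 * a2) / 16) * D f n + (a2 / 16) * D f (n - 1)|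
      ≤ (1 / 2) * max (⨆ k, |d f k|) (⨆ k, |D f k|) := by
  obtain ⟨C, hC⟩ := hf
  have hbdd : BddAbove (range fun k => |D f k|) := ⟨4 * C, by
    rintro _ ⟨k, rfl⟩
    exact abs_D_le hC k⟩
  have hD (k : ℤ) : |D f k| ≤ ⨆ k, |D f k| := le_ciSup hbdd k
  calc _ ≤ (⨆ k, |D f k|) / 4 :=
        abs_weno6_combination_le_s13 ha0 ha1 ha2 hsum (hD _) (hD _) (hD _) (hD _)
    _ ≤ (1 / 2) * (⨆ k, |D f k|) := by linarith [(abs_nonneg _).trans (hD 0)]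
    _ ≤ _ := by gcongr; exact le_max_right _ _
end
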